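/- Let p be prime, n ≥ 1, R = F_p[x,x^{-1}], and identify A = ⊕_ℤ(ℤ/pℤ)^n with R^n. Suppose U_m, U are additive subgroups of R^n with U ⊆ U_m, and e(U_m) and e(U) divide a fixed integer s > 0, and U_m → U pointwise. Then for any v ∈ R^n, the subgroups V_m of the lamplighter group L = A ⋊ ℤ with triples (s, U_m, v) converge in Sub(L) to the subgroup V with triple (s, U, v). -/

import Mathlib

open LaurentPolynomial SemidirectProduct
open Multiplicative

/-- `x = T 1` as a unit of `R = F_p[x,x⁻¹]`. -/
noncomputable def tUnit (p : ℕ) : (LaurentPolynomial (ZMod p))ˣ where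
  val := T 1
  inv := T (-1)
  val_inv := by rw [← T_add]; norm_num
  inv_val := by rw [← T_add]; norm_num

/-- The lamplighter group `L = A ⋊ ℤ` with base `A = R^n ≅ ⊕_ℤ(ℤ/pℤ)^n`,
`R = F_p[x,x⁻¹]`, where `ℤ` acts by the shift, i.e. multiplication by `x`. -/
noncomputable abbrev LampR (p n : ℕ) :=
  SemidirectProduct (Multiplicative (Fin n → LaurentPolynomial (ZMod p)))
    (Multiplicative ℤ)
    (zpowersHom (MulAut (Multiplicative (Fin n → LaurentPolynomial (ZMod p))))
      (AddEquiv.toMultiplicative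
        (DistribMulAction.toAddAut (LaurentPolynomial (ZMod p))ˣ
          (Fin n → LaurentPolynomial (ZMod p)) (tUnit p))))

/-- Multiplication by `x^s` as an additive endomorphism of `R^n`. -/
noncomputable def xpow (p n : ℕ) (s : ℤ) :
    (Fin n → LaurentPolynomial (ZMod p)) →+ (Fin n → LaurentPolynomial (ZMod p)) :=
  DistribMulAction.toAddMonoidHom _ (T s : LaurentPolynomial (ZMod p))

/-- The subgroup of the lamplighter group with triple `(s, U₀, v)`: the subgroup
generated by `U₀ ⊆ A` and the element `(v, s)`. -/
noncomputable def tripleSubgroup (p n : ℕ) (s : ℤ)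
    (U : AddSubgroup (Fin n → LaurentPolynomial (ZMod p)))
    (v : Fin n → LaurentPolynomial (ZMod p)) : Subgroup (LampR p n) :=
  Subgroup.closure
    ((fun u => inl (Multiplicative.ofAdd u)) '' (U : Set _) ∪
      {inl (Multiplicative.ofAdd v) * inr (Multiplicative.ofAdd s)})

section scratch
variable (p n : ℕ)
local notation "R" => LaurentPolynomial (ZMod p)
local notation "A" => Fin n → LaurentPolynomial (ZMod p)

noncomputable abbrev lampPhi : Multiplicative ℤ →* MulAut (Multiplicative (Fin n → LaurentPolynomial (ZMod p))) :=
  zpowersHom (MulAut (Multiplicative (Fin n → LaurentPolynomial (ZMod p))))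
      (AddEquiv.toMultiplicative
        (DistribMulAction.toAddAut (LaurentPolynomial (ZMod p))ˣ
          (Fin n → LaurentPolynomial (ZMod p)) (tUnit p)))

lemma lampPhi_one (a : A) : lampPhi p n (ofAdd 1) (ofAdd a) = ofAdd ((T 1 : R) • a) := by
  simp [lampPhi, AddEquiv.toMultiplicative, tUnit, Units.smul_def]

lemma lampPhi_neg_one (a : A) : lampPhi p n (ofAdd (-1)) (ofAdd a) = ofAdd ((T (-1) : R) • a) := by
  have : lampPhi p n (ofAdd 1) (ofAdd ((T (-1) : R) • a)) = ofAdd a := by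
    rw [lampPhi_one, smul_smul, ← T_add]
    norm_num
  have h2 : lampPhi p n (ofAdd (-1)) = (lampPhi p n (ofAdd 1))⁻¹ := by
    rw [← map_inv]; rfl
  rw [h2]
  exact_mod_cast (MulEquiv.symm_apply_eq _).mpr this.symm

lemma lampPhi_apply (t : ℤ) (a : A) :
    lampPhi p n (ofAdd t) (ofAdd a) = ofAdd ((T t : R) • a) := by
  induction t using Int.induction_on generalizing a with
  | zero => rw [show ((T 0 : LaurentPolynomial (ZMod p))) = 1 from T_zero]; simp
  | succ k ih =>
      have : (ofAdd ((k : ℤ) + 1) : Multiplicative ℤ) = ofAdd (k : ℤ) * ofAdd (1 : ℤ) := by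
        rw [← ofAdd_add]
      rw [this, map_mul, MulAut.mul_apply, lampPhi_one, ih, smul_smul, ← T_add]
  | pred k ih =>
      have : (ofAdd (-(k : ℤ) - 1) : Multiplicative ℤ) = ofAdd (-(k : ℤ)) * ofAdd (-1 : ℤ) := by
        rw [← ofAdd_add]; ring_nf
      rw [this, map_mul, MulAut.mul_apply, lampPhi_neg_one, ih, smul_smul, ← T_add]
      ring_nf
end scratch

section scratch2
variable (p n : ℕ)
local notation "R" => LaurentPolynomial (ZMod p)
local notation "A" => Fin n → LaurentPolynomial (ZMod p)

noncomputable def gammaEl (s : ℤ) (v : Fin n → LaurentPolynomial (ZMod p)) : LampR p n :=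
  inl (ofAdd v) * inr (ofAdd s)

lemma lampPhi_apply' (s : ℤ) (a : A) :
    (AddEquiv.toMultiplicative (DistribMulAction.toAddEquiv (Fin n → R) (tUnit p)) ^ s)
      (ofAdd a) = ofAdd ((T s : R) • a) := by
  have := lampPhi_apply p n s a
  simp [lampPhi, zpowersHom_apply, DistribMulAction.toAddAut] at this
  exact this

lemma gamma_inl (s : ℤ) (v a : A) :
    gammaEl p n s v * inl (ofAdd a) = inl (ofAdd ((T s : R) • a)) * gammaEl p n s v := by
  ext
  · simp [gammaEl, mul_left, lampPhi_apply' , mul_comm]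
  · simp [gammaEl, mul_right]

lemma gamma_inv_inl (s : ℤ) (v a : A) :
    (gammaEl p n s v)⁻¹ * inl (ofAdd a) =
      inl (ofAdd ((T (-s) : R) • a)) * (gammaEl p n s v)⁻¹ := by
  have h := gamma_inl p n s v (((T (-s) : R)) • a)
  have h2 : (T s : R) • (T (-s) : R) • a = a := by
    rw [smul_smul, ← T_add]; simp
  rw [h2] at h
  calc (gammaEl p n s v)⁻¹ * inl (ofAdd a)
      = (gammaEl p n s v)⁻¹ * (inl (ofAdd a) * gammaEl p n s v) * (gammaEl p n s v)⁻¹ := by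
        group
    _ = (gammaEl p n s v)⁻¹ * (gammaEl p n s v * inl (ofAdd ((T (-s) : R) • a))) *
          (gammaEl p n s v)⁻¹ := by rw [h]
    _ = _ := by group

lemma gamma_zpow_inl (s : ℤ) (v : A) (k : ℤ) (a : A) :
    gammaEl p n s v ^ k * inl (ofAdd a) =
      inl (ofAdd ((T (k * s) : R) • a)) * gammaEl p n s v ^ k := by
  induction k using Int.induction_on generalizing a with
  | zero => rw [show ((0:ℤ) * s) = 0 by ring, show (T 0 : R) = 1 from T_zero, one_smul]; simp
  | succ k ih =>
      rw [zpow_add_one, mul_assoc, gamma_inl, ← mul_assoc, ih, smul_smul, ← T_add, mul_assoc,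
        show (k : ℤ) * s + s = ((k : ℤ) + 1) * s by ring]
  | pred k ih =>
      rw [zpow_sub_one, mul_assoc, gamma_inv_inl, ← mul_assoc, ih, smul_smul, ← T_add, mul_assoc,
        show (-(k : ℤ)) * s + -s = (-(k : ℤ) - 1) * s by ring]

end scratch2

section scratch3
variable (p n : ℕ)
local notation "R" => LaurentPolynomial (ZMod p)
local notation "A" => Fin n → LaurentPolynomial (ZMod p)

lemma fix_iff (s : ℤ) (U : AddSubgroup A) (h : U.map (xpow p n s) = U) :
    ∀ u, u ∈ U ↔ (T s : R) • u ∈ U := by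
  intro u
  constructor
  · intro hu
    rw [← h]
    exact ⟨u, hu, rfl⟩
  · intro hu
    rw [← h] at hu
    obtain ⟨w, hw, hwu⟩ := hu
    have hxw : (T s : R) • w = (T s : R) • u := hwu
    have h2 : (T (-s) : R) • (T s : R) • w = (T (-s) : R) • (T s : R) • u := by rw [hxw]
    rw [smul_smul, smul_smul, ← T_add, show -s + s = (0:ℤ) by ring, T_zero, one_smul,
      one_smul] at h2
    rwa [← h2]

lemma fix_zsmul (s : ℤ) (U : AddSubgroup A) (hfix : ∀ u, u ∈ U ↔ (T s : R) • u ∈ U)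
    (k : ℤ) (u : A) (hu : u ∈ U) : (T (k * s) : R) • u ∈ U := by
  induction k using Int.induction_on with
  | zero =>
      have h0 : (T ((0:ℤ) * s) : R) = 1 := by rw [zero_mul]; exact T_zero
      rw [h0, one_smul]; exact hu
  | succ k ih =>
      have : (T (((k : ℤ) + 1) * s) : R) • u = (T s : R) • (T ((k : ℤ) * s) : R) • u := by
        rw [smul_smul, ← T_add]; ring_nf
      rw [this]
      exact (hfix _).mp ih
  | pred k ih =>
      have key : ∀ w, w ∈ U → (T (-s) : R) • w ∈ U := by
        intro w hw
        refine (hfix _).mpr ?_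
        have : (T s : R) • (T (-s) : R) • w = w := by rw [smul_smul, ← T_add]; simp
        rwa [this]
      have : (T ((-(k : ℤ) - 1) * s) : R) • u = (T (-s) : R) • (T ((-(k : ℤ)) * s) : R) • u := by
        rw [smul_smul, ← T_add]; ring_nf
      rw [this]
      exact key _ ih

lemma mem_iff_exists (s : ℤ) (v : A) (U : AddSubgroup A)
    (hfix : ∀ u, u ∈ U ↔ (T s : R) • u ∈ U) (g : LampR p n) :
    g ∈ tripleSubgroup p n s U v ↔
      ∃ k : ℤ, ∃ u ∈ U, g = inl (ofAdd u) * gammaEl p n s v ^ k := by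
  constructor
  · intro hg
    refine Subgroup.closure_induction ?_ ?_ ?_ ?_ hg
    · rintro x (⟨u, hu, rfl⟩ | rfl)
      · exact ⟨0, u, hu, by simp⟩
      · exact ⟨1, 0, U.zero_mem, by simp [gammaEl]⟩
    · exact ⟨0, 0, U.zero_mem, by simp⟩
    · rintro x y - - ⟨k1, u1, hu1, rfl⟩ ⟨k2, u2, hu2, rfl⟩
      refine ⟨k1 + k2, u1 + (T (k1 * s) : R) • u2, U.add_mem hu1 (fix_zsmul p n s U hfix k1 u2 hu2), ?_⟩
      calc inl (ofAdd u1) * gammaEl p n s v ^ k1 * (inl (ofAdd u2) * gammaEl p n s v ^ k2)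
          = inl (ofAdd u1) * (gammaEl p n s v ^ k1 * inl (ofAdd u2)) * gammaEl p n s v ^ k2 := by
            group
        _ = inl (ofAdd u1) * (inl (ofAdd ((T (k1 * s) : R) • u2)) * gammaEl p n s v ^ k1) *
              gammaEl p n s v ^ k2 := by rw [gamma_zpow_inl]
        _ = inl (ofAdd (u1 + (T (k1 * s) : R) • u2)) * gammaEl p n s v ^ (k1 + k2) := by
            rw [ofAdd_add, map_mul, zpow_add]; group
    · rintro x - ⟨k, u, hu, rfl⟩
      refine ⟨-k, (T (-k * s) : R) • (-u), fix_zsmul p n s U hfix (-k) (-u) (U.neg_mem hu), ?_⟩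
      calc (inl (ofAdd u) * gammaEl p n s v ^ k)⁻¹
          = gammaEl p n s v ^ (-k) * inl (ofAdd (-u)) := by
            rw [mul_inv_rev, ← zpow_neg, ← map_inv, ← ofAdd_neg]
        _ = inl (ofAdd ((T (-k * s) : R) • (-u))) * gammaEl p n s v ^ (-k) := by
            rw [gamma_zpow_inl]
  · rintro ⟨k, u, hu, rfl⟩
    have h1 : inl (ofAdd u) ∈ tripleSubgroup p n s U v :=
      Subgroup.subset_closure (Or.inl ⟨u, hu, rfl⟩)
    have h2 : gammaEl p n s v ∈ tripleSubgroup p n s U v :=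
      Subgroup.subset_closure (Or.inr rfl)
    exact (tripleSubgroup p n s U v).mul_mem h1 ((tripleSubgroup p n s U v).zpow_mem h2 k)

lemma rightHom_gamma (s : ℤ) (v : A) : rightHom (gammaEl p n s v) = ofAdd s := by
  simp [gammaEl]

lemma mem_iff (s : ℤ) (hs : s ≠ 0) (v : A) (U : AddSubgroup A)
    (hfix : ∀ u, u ∈ U ↔ (T s : R) • u ∈ U) (g : LampR p n) :
    g ∈ tripleSubgroup p n s U v ↔
      s ∣ toAdd (rightHom g) ∧
        toAdd ((g * gammaEl p n s v ^ (-(toAdd (rightHom g) / s))).left) ∈ U := by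
  rw [mem_iff_exists p n s v U hfix]
  constructor
  · rintro ⟨k, u, hu, rfl⟩
    have ht : toAdd (rightHom (inl (ofAdd u) * gammaEl p n s v ^ k)) = k * s := by
      rw [map_mul, rightHom_inl, one_mul, map_zpow, rightHom_gamma, toAdd_zpow, toAdd_ofAdd,
        smul_eq_mul]
    rw [ht, Int.mul_ediv_cancel _ hs]
    refine ⟨dvd_mul_left s k, ?_⟩
    have hcan : inl (ofAdd u) * gammaEl p n s v ^ k * gammaEl p n s v ^ (-k) =
        inl (ofAdd u) := by group
    rw [hcan, left_inl, toAdd_ofAdd]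
    exact hu
  · rintro ⟨hdvd, hmem⟩
    obtain ⟨c, hc⟩ := hdvd
    have hk : toAdd (rightHom g) / s = c := by
      rw [hc]; exact Int.mul_ediv_cancel_left c hs
    rw [hk] at hmem
    refine ⟨c, toAdd ((g * gammaEl p n s v ^ (-c)).left), hmem, ?_⟩
    have hr : (g * gammaEl p n s v ^ (-c)).right = 1 := by
      have h1 : rightHom (g * gammaEl p n s v ^ (-c)) = 1 := by
        have h2 : toAdd (rightHom (g * gammaEl p n s v ^ (-c))) = 0 := by
          rw [map_mul, map_zpow, rightHom_gamma, toAdd_mul, toAdd_zpow, toAdd_ofAdd, hc,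
            smul_eq_mul]
          ring
        rwa [toAdd_eq_zero] at h2
      exact h1
    have hinl : g * gammaEl p n s v ^ (-c) = inl ((g * gammaEl p n s v ^ (-c)).left) := by
      conv_lhs => rw [← inl_left_mul_inr_right (g * gammaEl p n s v ^ (-c))]
      rw [hr, map_one, mul_one]
    rw [ofAdd_toAdd, ← hinl]
    group

end scratch3

/-- Suppose `U ⊆ U_m` are additive subgroups of `R^n` with `e(U_m)` and `e(U)`
dividing a fixed `s > 0` (equivalently `x^s U = U` and `x^s U_m = U_m`), and
`U_m → U` pointwise. Then for any `v ∈ R^n` the subgroups of the lamplighter group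
with triples `(s, U_m, v)` converge in `Sub(L)` to the subgroup with triple
`(s, U, v)`. -/
theorem stmt18 (p n : ℕ) [Fact p.Prime] (s : ℤ) (hs : 0 < s)
    (U : AddSubgroup (Fin n → LaurentPolynomial (ZMod p)))
    (Um : ℕ → AddSubgroup (Fin n → LaurentPolynomial (ZMod p)))
    (hle : ∀ m, U ≤ Um m)
    (hfixU : U.map (xpow p n s) = U)
    (hfixUm : ∀ m, (Um m).map (xpow p n s) = Um m)
    (hconv : ∀ w : Fin n → LaurentPolynomial (ZMod p),
      ∀ᶠ m in Filter.atTop, (w ∈ Um m ↔ w ∈ U))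
    (v : Fin n → LaurentPolynomial (ZMod p)) :
    ∀ g : LampR p n, ∀ᶠ m in Filter.atTop,
      (g ∈ tripleSubgroup p n s (Um m) v ↔ g ∈ tripleSubgroup p n s U v) := by
  intro g
  have hfixU' := fix_iff p n s U hfixU
  have hfixUm' := fun m => fix_iff p n s (Um m) (hfixUm m)
  filter_upwards [hconv
    (toAdd ((g * gammaEl p n s v ^ (-(toAdd (rightHom g) / s))).left))] with m hm
  rw [mem_iff p n s hs.ne' v (Um m) (hfixUm' m) g, mem_iff p n s hs.ne' v U hfixU' g]
  exact and_congr_right fun _ => hm
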